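/- Let A and B be commutative unital complex normed algebras and let f : A → B be a continuous injective unital algebra homomorphism such that B is an integral extension of f(A), i.e., every b ∈ B is a root of some monic polynomial with coefficients in f(A). Suppose that A is a full subalgebra of its completion Ã, meaning that every a ∈ A whose image in à is invertible in à is already invertible in A, and that the set of invertible elements of A is dense in A. Then the set of invertible elements of B is dense in B. -/

import Mathlib

/-!
The completion `Ã` is a Banach algebra whose invertible group is dense, being the image of that
of `A`. In such an algebra, if the leading coefficient of `P` is invertible, then `P(x)` is
invertible for a dense set of `x`. This goes by induction on the degree: `P'` has the same
property, and near a point where `P'(x)` is invertible the inverse function theorem makes `P` an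
open map, so its image meets the dense invertible group. Fullness pulls this back to `A`. Given
`b ∈ B` with `p(b) = 0` for a monic `p`, pick `a` close to `0` with `p(a)` invertible. Then
`b - f(a)` divides `p(b) - f(p(a)) = -f(p(a))`, so `b - f(a)` is an invertible element close
to `b`.
-/

open Polynomial Filter Topology UniformSpace

theorem IsDenseInducing.dense_preimage {α β : Type*} [TopologicalSpace α] [TopologicalSpace β]
    {e : α → β} (he : IsDenseInducing e) {s : Set β} (hs : Dense s) (ho : IsOpen s) :
    Dense (e ⁻¹' s) := by
  rw [dense_iff_inter_open]
  rintro U hU ⟨x, hx⟩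
  obtain ⟨V, hV, rfl⟩ := he.isInducing.isOpen_iff.mp hU
  obtain ⟨a, haV, has⟩ :=
    he.dense.exists_mem_open (hV.inter ho) (hs.inter_open_nonempty V hV ⟨e x, hx⟩)
  exact ⟨a, haV, has⟩

namespace Polynomial

theorem natDegree_derivative_eq_and_isUnit_leadingCoeff {R : Type*} [CommRing R] [Nontrivial R]
    {P : R[X]} {n : ℕ} (hn : P.natDegree = n + 1) (hunit : IsUnit (P.leadingCoeff * (n + 1))) :
    P.derivative.natDegree = n ∧ IsUnit P.derivative.leadingCoeff := by
  have hcoeff : P.derivative.coeff n = P.leadingCoeff * (n + 1) := by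
    rw [coeff_derivative, leadingCoeff, hn]
  have hdeg : P.derivative.natDegree = n :=
    natDegree_eq_of_le_of_coeff_ne_zero (by have := natDegree_derivative_le P; omega)
      (hcoeff ▸ hunit.ne_zero)
  exact ⟨hdeg, by rwa [leadingCoeff, hdeg, hcoeff]⟩

theorem isUnit_sub_of_eval₂_eq_zero {R S : Type*} [CommRing R] [CommRing S] (f : R →+* S)
    {p : R[X]} {a : R} {b : S} (hb : p.eval₂ f b = 0) (ha : IsUnit (f (p.eval a))) :
    IsUnit (b - f a) := by
  obtain ⟨c, hc⟩ := sub_dvd_eval_sub b (f a) (p.map f)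
  rw [eval_map, hb, eval_map, eval₂_at_apply, zero_sub] at hc
  exact isUnit_of_mul_isUnit_left (hc ▸ ha.neg)

variable {C : Type*} [NormedCommRing C]

theorem hasStrictFDerivAt_eval {𝕜 : Type*} [NontriviallyNormedField 𝕜] [NormedAlgebra 𝕜 C]
    (P : C[X]) (x : C) :
    HasStrictFDerivAt (𝕜 := 𝕜) (fun y ↦ P.eval y)
      (P.derivative.eval x • ContinuousLinearMap.id 𝕜 C) x := by
  induction P using Polynomial.induction_on' with
  | add p q hp hq =>
    simp only [eval_add, derivative_add]
    exact (hp.fun_add hq).congr_fderiv (by ext; simp [add_mul])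
  | monomial n a =>
    simpa [derivative_monomial, smul_smul, mul_assoc] using
      (hasStrictFDerivAt_pow (𝕜 := 𝕜) n (x := x)).const_mul a

theorem map_eval_nhds_eq_of_isUnit_derivative (𝕜 : Type*) [NontriviallyNormedField 𝕜]
    [NormedAlgebra 𝕜 C] [CompleteSpace C] {P : C[X]} {x : C}
    (hx : IsUnit (P.derivative.eval x)) : Filter.map (fun y ↦ P.eval y) (𝓝 x) = 𝓝 (P.eval x) :=
  (hasStrictFDerivAt_eval (𝕜 := 𝕜) P x).map_nhds_eq_of_surj <|
    LinearMap.range_eq_top.mpr fun y ↦ ⟨hx.unit⁻¹ * y, by simp [← mul_assoc]⟩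

theorem dense_isUnit_eval_of_dense_isUnit_derivative (𝕜 : Type*) [NontriviallyNormedField 𝕜]
    [NormedAlgebra 𝕜 C] [CompleteSpace C] (hG : Dense {x : C | IsUnit x}) {P : C[X]}
    (hP' : Dense {x | IsUnit (P.derivative.eval x)}) : Dense {x | IsUnit (P.eval x)} := by
  rw [dense_iff_inter_open]
  intro U hU hne
  obtain ⟨x, hxU, hx⟩ := hP'.inter_open_nonempty U hU hne
  have himage : (fun y ↦ P.eval y) '' U ∈ 𝓝 (P.eval x) :=
    map_eval_nhds_eq_of_isUnit_derivative 𝕜 hx ▸ image_mem_map (hU.mem_nhds hxU)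
  obtain ⟨_, hy, y, hyU, rfl⟩ := hG.inter_nhds_nonempty himage
  exact ⟨y, hyU, hy⟩

theorem dense_isUnit_eval (𝕜 : Type*) [NontriviallyNormedField 𝕜] [CharZero 𝕜]
    [NormedAlgebra 𝕜 C] [CompleteSpace C] (hG : Dense {x : C | IsUnit x}) {P : C[X]}
    (hP : IsUnit P.leadingCoeff) : Dense {x | IsUnit (P.eval x)} := by
  nontriviality C
  induction hn : P.natDegree generalizing P with
  | zero =>
    have hconst : ∀ x, P.eval x = P.leadingCoeff := by
      intro x
      rw [leadingCoeff, hn]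
      nth_rw 1 [eq_C_of_natDegree_eq_zero hn]
      exact eval_C
    simp [hconst, hP]
  | succ n ih =>
    have hn1 : IsUnit (n + 1 : C) := by
      simpa using (isUnit_iff_ne_zero.mpr (n.cast_add_one_ne_zero (R := 𝕜))).map (algebraMap 𝕜 C)
    obtain ⟨hdeg, hlead⟩ := natDegree_derivative_eq_and_isUnit_leadingCoeff hn (hP.mul hn1)
    exact dense_isUnit_eval_of_dense_isUnit_derivative 𝕜 hG (ih hlead hdeg)

end Polynomial

theorem dense_isUnit_eval_of_full (𝕜 : Type*) [NontriviallyNormedField 𝕜] [CharZero 𝕜]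
    {A : Type*} [NormedCommRing A] [NormedAlgebra 𝕜 A]
    (hfull : ∀ a : A, IsUnit (a : Completion A) → IsUnit a) (hA : Dense {a : A | IsUnit a})
    {p : A[X]} (hp : p.Monic) : Dense {a | IsUnit (p.eval a)} := by
  set P := p.map (Completion.coeRingHom : A →+* Completion A)
  have hG : Dense {x : Completion A | IsUnit x} :=
    (Completion.denseRange_coe.dense_image (Completion.continuous_coe A) hA).mono <|
      Set.image_subset_iff.mpr fun a ha ↦ ha.map Completion.coeRingHom
  have hP : Dense {x | IsUnit (P.eval x)} :=
    dense_isUnit_eval 𝕜 hG ((hp.map Completion.coeRingHom).leadingCoeff ▸ isUnit_one)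
  refine (Completion.isDenseInducing_coe.dense_preimage hP
    (Units.isOpen.preimage P.continuous)).mono fun a ha ↦ hfull _ ?_
  rw [Set.mem_preimage, Set.mem_ofPred_eq, eval_map] at ha
  convert ha using 1
  exact (eval₂_at_apply (Completion.coeRingHom : A →+* Completion A) a).symm

theorem dense_invertibles_of_integral_extension_of_full_general
    (A B : Type*) [NormedCommRing A] [NormedAlgebra ℂ A]
    [NormedCommRing B] [NormedAlgebra ℂ B]
    (f : A →ₐ[ℂ] B) (hcont : Continuous f)
    (hint : ∀ b : B, ∃ p : Polynomial A, p.Monic ∧ Polynomial.eval₂ f.toRingHom b p = 0)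
    (hfull : ∀ a : A, IsUnit (↑a : UniformSpace.Completion A) → IsUnit a)
    (hA : Dense {a : A | IsUnit a}) :
    Dense {b : B | IsUnit b} := by
  intro b
  obtain ⟨p, hp, hpb⟩ := hint b
  set S := {a : A | IsUnit (p.eval a)}
  have : (𝓝[S] 0).NeBot :=
    mem_closure_iff_nhdsWithin_neBot.mp (dense_isUnit_eval_of_full ℂ hfull hA hp 0)
  have hlim : Tendsto (fun a ↦ b - f a) (𝓝[S] 0) (𝓝 b) := by
    simpa using (tendsto_const_nhds.sub (hcont.tendsto 0)).mono_left nhdsWithin_le_nhds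
  exact mem_closure_of_tendsto hlim <| eventually_nhdsWithin_of_forall fun a ha ↦
    isUnit_sub_of_eval₂_eq_zero f.toRingHom hpb (ha.map f)

/-- **Corollary 2.2.** Let `A` and `B` be commutative unital complex normed algebras and let
`B` be an integral extension of `A` (via a continuous injective unital algebra homomorphism
`f : A → B`).  If `A` is a full subalgebra of its completion `Ã` and `A` has dense invertible
group, then `B` has dense invertible group. -/
theorem dense_invertibles_of_integral_extension_of_full
    (A B : Type*) [NormedCommRing A] [NormedAlgebra ℂ A]
    [NormedCommRing B] [NormedAlgebra ℂ B]
    (f : A →ₐ[ℂ] B) (hcont : Continuous f) (hinj : Function.Injective f)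
    (hint : ∀ b : B, ∃ p : Polynomial A, p.Monic ∧ Polynomial.eval₂ f.toRingHom b p = 0)
    (hfull : ∀ a : A, IsUnit (↑a : UniformSpace.Completion A) → IsUnit a)
    (hA : Dense {a : A | IsUnit a}) :
    Dense {b : B | IsUnit b} :=
  dense_invertibles_of_integral_extension_of_full_general A B f hcont hint hfull hA
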